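/- Let A be the n×n matrix with a_{ii}=1 and a_{ij}=-λ_j for i≠j, where λ_i ≥ 0. Then the rank of A is at least n-1; equivalently, the kernel of A has dimension at most 1. -/

import Mathlib

/-!
Row `i` of `A x = 0` reads `(1 + λᵢ) xᵢ = ∑ⱼ λⱼ xⱼ`. As `1 + λᵢ > 0`, every kernel vector is the
multiple `∑ⱼ λⱼ xⱼ` of the fixed vector `((1 + λᵢ)⁻¹)ᵢ`, so the kernel is at most a line, and
rank–nullity gives the rank bound.
-/

open Matrix Module

section

variable {ι K : Type*} [Fintype ι] [DecidableEq ι] [Field K]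

theorem mulVec_of_ite_one_neg_apply (lam x : ι → K) (i : ι) :
    ((Matrix.of fun i j => if i = j then 1 else -lam j) *ᵥ x) i
      = (1 + lam i) * x i - lam ⬝ᵥ x := by
  have hA : (Matrix.of fun i j => if i = j then 1 else -lam j)
      = diagonal (1 + lam) - Matrix.of fun _ j => lam j := by
    ext i j
    by_cases h : i = j <;> simp [h]
  rw [hA, sub_mulVec, Pi.sub_apply, mulVec_diagonal]
  rfl

theorem ker_le_span_singleton (lam : ι → K) (hlam : ∀ i, 1 + lam i ≠ 0) :
    LinearMap.ker (Matrix.of fun i j => if i = j then 1 else -lam j).mulVecLin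
      ≤ K ∙ fun i => (1 + lam i)⁻¹ := by
  intro x hx
  rw [Submodule.mem_span_singleton]
  refine ⟨lam ⬝ᵥ x, funext fun i => ?_⟩
  have hxi := congrFun hx i
  rw [mulVecLin_apply, mulVec_of_ite_one_neg_apply, Pi.zero_apply, sub_eq_zero] at hxi
  simp only [Pi.smul_apply, smul_eq_mul, ← hxi]
  field_simp [hlam i]

theorem finrank_ker_le_one (lam : ι → K) (hlam : ∀ i, 1 + lam i ≠ 0) :
    finrank K (LinearMap.ker (Matrix.of fun i j => if i = j then 1 else -lam j).mulVecLin) ≤ 1 :=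
  (Submodule.finrank_mono (ker_le_span_singleton lam hlam)).trans
    ((finrank_span_le_card _).trans (by simp))

end

theorem Matrix.rank_add_finrank_ker {m n K : Type*} [Fintype n] [Field K] (A : Matrix m n K) :
    A.rank + finrank K (LinearMap.ker A.mulVecLin) = Fintype.card n := by
  rw [Matrix.rank, LinearMap.finrank_range_add_finrank_ker, finrank_fintype_fun_eq_card]

theorem stmt5 (n : ℕ) (lam : Fin n → ℝ) (hlam : ∀ i, 0 ≤ lam i)
    (A : Matrix (Fin n) (Fin n) ℝ)
    (hA : A = Matrix.of fun i j => if i = j then 1 else -lam j) :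
    n - 1 ≤ A.rank ∧ Module.finrank ℝ (LinearMap.ker A.mulVecLin) ≤ 1 := by
  have hker : finrank ℝ (LinearMap.ker A.mulVecLin) ≤ 1 :=
    hA ▸ finrank_ker_le_one lam fun i => by linarith [hlam i]
  have hrank := A.rank_add_finrank_ker
  rw [Fintype.card_fin] at hrank
  exact ⟨by omega, hker⟩
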